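/- Let D_k = lim_{x→∞} #{n ≤ x : H(n) ≥ k}/x (which exists). Then for all k ≥ 1 and all sufficiently large x, D_k(x) := #{n ≤ x : H(n) ≥ k} ≤ 4x/(2↑↑k), and consequently D_k ≤ 4/(2↑↑k). -/

import Mathlib

/-!
If `H n ≥ j + 1`, some prime power `p ^ α ∥ n` has `H α ≥ j`; by induction `α ≥ tet j`, so
`p ^ tet j ∣ n`. Hence the integers `n ≤ x` with `H n ≥ k ≥ 2` are covered by the multiples of
`m ^ T`, `2 ≤ m ≤ x`, with `T = tet (k - 1) ≥ 2`, and there are at most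
`x ∑_{m ≥ 2} m ^ (-T) ≤ x 2 ^ (2 - T) ∑_{m ≥ 2} m ^ (-2) ≤ 4 x / 2 ^ T = 4 x / tet k` of them.
The case `k = 1` is trivial since `tet 1 = 2`.
-/

/-- Tetration base 2: `tet 0 = 1`, `tet (m+1) = 2 ^ tet m`. -/
def tet : ℕ → ℕ
  | 0 => 1
  | m + 1 => 2 ^ tet m

/-- Height of the super-factorization tree of `n`:
`H 1 = 0` and `H n = 1 + max_{p^α ∥ n} H α` for `n > 1`. -/
def H : ℕ → ℕ
  | n =>
    if h : n ≤ 1 then 0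
    else 1 + (n.primeFactors.attach.sup fun p => H (n.factorization p.1))
decreasing_by
  exact Nat.factorization_lt _ (by omega)

open Finset

lemma tet_pos (k : ℕ) : 0 < tet k := by
  cases k with
  | zero => exact Nat.one_pos
  | succ k => exact Nat.two_pow_pos _

lemma two_le_tet_succ (k : ℕ) : 2 ≤ tet (k + 1) :=
  Nat.le_self_pow (tet_pos k).ne' 2

lemma H_of_le_one {n : ℕ} (h : n ≤ 1) : H n = 0 := by
  rw [H]; simp [h]

lemma H_of_one_lt {n : ℕ} (h : 1 < n) :
    H n = 1 + (n.primeFactors.attach.sup fun p => H (n.factorization p.1)) := by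
  rw [H]; simp [Nat.not_le.mpr h]

lemma exists_mem_primeFactors_le_H_factorization {n j : ℕ} (h : j + 1 ≤ H n) :
    ∃ p ∈ n.primeFactors, j ≤ H (n.factorization p) := by
  have hn : 1 < n := by
    by_contra hn
    rw [H_of_le_one (not_lt.mp hn)] at h
    omega
  rw [H_of_one_lt hn] at h
  have hne : n.primeFactors.attach.Nonempty :=
    attach_nonempty_iff.mpr (Nat.nonempty_primeFactors.mpr hn)
  obtain ⟨p, -, hp⟩ := exists_mem_eq_sup _ hne fun p => H (n.factorization p.1)
  exact ⟨p.1, p.2, by omega⟩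

lemma tet_le_of_le_H {n j : ℕ} (hn : n ≠ 0) (h : j ≤ H n) : tet j ≤ n := by
  induction j generalizing n with
  | zero => exact Nat.one_le_iff_ne_zero.mpr hn
  | succ j ih =>
    obtain ⟨p, hp, hj⟩ := exists_mem_primeFactors_le_H_factorization h
    have hα : n.factorization p ≠ 0 := Finsupp.mem_support_iff.mp hp
    calc tet (j + 1) = 2 ^ tet j := rfl
      _ ≤ p ^ tet j := Nat.pow_le_pow_left (Nat.prime_of_mem_primeFactors hp).two_le _
      _ ≤ p ^ n.factorization p := Nat.pow_le_pow_right (Nat.pos_of_mem_primeFactors hp) (ih hα hj)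
      _ ≤ n := Nat.le_of_dvd (Nat.pos_of_ne_zero hn) (Nat.ordProj_dvd n p)

lemma exists_mem_primeFactors_pow_tet_dvd {n j : ℕ} (h : j + 1 ≤ H n) :
    ∃ p ∈ n.primeFactors, p ^ tet j ∣ n := by
  obtain ⟨p, hp, hj⟩ := exists_mem_primeFactors_le_H_factorization h
  have hα : n.factorization p ≠ 0 := Finsupp.mem_support_iff.mp hp
  exact ⟨p, hp, (pow_dvd_pow p (tet_le_of_le_H hα hj)).trans (Nat.ordProj_dvd n p)⟩

lemma card_filter_le_mul_sum_inv (s : Finset ℕ) (f : ℕ → ℕ) (P : ℕ → Prop) [DecidablePred P]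
    (x : ℕ) (h : ∀ n ∈ Icc 1 x, P n → ∃ m ∈ s, f m ∣ n) :
    (#{n ∈ Icc 1 x | P n} : ℝ) ≤ x * ∑ m ∈ s, ((f m : ℝ))⁻¹ := by
  have hsub : {n ∈ Icc 1 x | P n} ⊆ s.biUnion fun m => {n ∈ Ioc 0 x | f m ∣ n} := by
    intro n hn
    obtain ⟨hnx, hPn⟩ := mem_filter.mp hn
    obtain ⟨m, hm, hdvd⟩ := h n hnx hPn
    exact mem_biUnion.mpr ⟨m, hm, mem_filter.mpr ⟨hnx, hdvd⟩⟩
  have hcard : #{n ∈ Icc 1 x | P n} ≤ ∑ m ∈ s, x / f m := by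
    calc #{n ∈ Icc 1 x | P n} ≤ ∑ m ∈ s, #{n ∈ Ioc 0 x | f m ∣ n} :=
          (card_le_card hsub).trans card_biUnion_le
      _ = ∑ m ∈ s, x / f m := by simp only [Nat.Ioc_filter_dvd_card_eq_div]
  calc (#{n ∈ Icc 1 x | P n} : ℝ) ≤ ∑ m ∈ s, ((x / f m : ℕ) : ℝ) := by exact_mod_cast hcard
    _ ≤ ∑ m ∈ s, (x : ℝ) / f m := sum_le_sum fun _ _ => Nat.cast_div_le
    _ = x * ∑ m ∈ s, ((f m : ℝ))⁻¹ := by simp only [mul_sum, div_eq_mul_inv]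

lemma sum_Ioc_one_inv_sq_le_one (x : ℕ) : ∑ m ∈ Ioc 1 x, ((m : ℝ) ^ 2)⁻¹ ≤ 1 := by
  have hsub : Ioc 1 x ⊆ Ioo 1 (x + 1) := fun m hm => by
    simp only [mem_Ioc, mem_Ioo] at hm ⊢; omega
  calc ∑ m ∈ Ioc 1 x, ((m : ℝ) ^ 2)⁻¹ ≤ ∑ m ∈ Ioo 1 (x + 1), ((m : ℝ) ^ 2)⁻¹ :=
        sum_le_sum_of_subset_of_nonneg hsub fun _ _ _ => by positivity
    _ ≤ 2 / ((1 : ℕ) + 1) := sum_Ioo_inv_sq_le 1 (x + 1)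
    _ = 1 := by norm_num

lemma sum_Ioc_one_inv_pow_add_two_le (x S : ℕ) :
    ∑ m ∈ Ioc 1 x, ((m : ℝ) ^ (S + 2))⁻¹ ≤ (2 ^ S)⁻¹ := by
  calc ∑ m ∈ Ioc 1 x, ((m : ℝ) ^ (S + 2))⁻¹ ≤ ∑ m ∈ Ioc 1 x, (2 ^ S)⁻¹ * ((m : ℝ) ^ 2)⁻¹ := by
        refine sum_le_sum fun m hm => ?_
        have hm2 : (2 : ℝ) ≤ m := by exact_mod_cast (mem_Ioc.mp hm).1
        rw [pow_add, mul_inv]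
        gcongr
    _ = (2 ^ S)⁻¹ * ∑ m ∈ Ioc 1 x, ((m : ℝ) ^ 2)⁻¹ := (mul_sum _ _ _).symm
    _ ≤ (2 ^ S)⁻¹ * 1 := by gcongr; exact sum_Ioc_one_inv_sq_le_one x
    _ = (2 ^ S)⁻¹ := mul_one _

lemma card_filter_le_H_le {k : ℕ} (hk : 1 ≤ k) (x : ℕ) :
    (#{n ∈ Icc 1 x | k ≤ H n} : ℝ) ≤ 4 * x / tet k := by
  obtain _ | _ | j := k
  · omega
  · calc (#{n ∈ Icc 1 x | 1 ≤ H n} : ℝ) ≤ x := by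
          exact_mod_cast (card_filter_le _ _).trans (by simp)
      _ ≤ 4 * x / tet 1 := by norm_num [tet]; linarith [(Nat.cast_nonneg x : (0 : ℝ) ≤ x)]
  · obtain ⟨S, hS⟩ : ∃ S, tet (j + 1) = S + 2 := ⟨tet (j + 1) - 2, by have := two_le_tet_succ j; omega⟩
    have hcover : ∀ n ∈ Icc 1 x, j + 2 ≤ H n → ∃ m ∈ Ioc 1 x, m ^ (S + 2) ∣ n := by
      intro n hn hH
      obtain ⟨p, hp, hdvd⟩ := exists_mem_primeFactors_pow_tet_dvd hH
      refine ⟨p, mem_Ioc.mpr ⟨(Nat.prime_of_mem_primeFactors hp).one_lt, ?_⟩, hS ▸ hdvd⟩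
      exact (Nat.le_of_mem_primeFactors hp).trans (mem_Icc.mp hn).2
    calc (#{n ∈ Icc 1 x | j + 2 ≤ H n} : ℝ) ≤ x * ∑ m ∈ Ioc 1 x, (((m ^ (S + 2) : ℕ) : ℝ))⁻¹ :=
          card_filter_le_mul_sum_inv _ _ _ x hcover
      _ ≤ x * (2 ^ S)⁻¹ := by
          push_cast
          gcongr
          exact sum_Ioc_one_inv_pow_add_two_le x S
      _ = 4 * x / tet (j + 2) := by
          rw [show tet (j + 2) = 2 ^ (S + 2) by rw [← hS]; rfl]
          push_cast
          ring

theorem stmt12 :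
    ∃ x₀ : ℕ, ∀ k : ℕ, 1 ≤ k →
      (∀ x : ℕ, x₀ ≤ x →
        (((Finset.Icc 1 x).filter fun n => k ≤ H n).card : ℝ) ≤ 4 * x / tet k) ∧
      (∀ D : ℝ,
        Filter.Tendsto
          (fun x : ℕ => (((Finset.Icc 1 x).filter fun n => k ≤ H n).card : ℝ) / x)
          Filter.atTop (nhds D) →
        D ≤ 4 / tet k) := by
  refine ⟨0, fun k hk => ⟨fun x _ => card_filter_le_H_le hk x, fun D hD => ?_⟩⟩
  refine le_of_tendsto' hD fun x => ?_
  rcases eq_or_ne x 0 with rfl | hx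
  · simp only [Nat.cast_zero, div_zero]
    exact div_nonneg zero_le_four (Nat.cast_nonneg _)
  · rw [div_le_iff₀ (by positivity)]
    exact (card_filter_le_H_le hk x).trans_eq (by ring)
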